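/- Let X be an irreducible aperiodic Markov chain on a finite state space A with stationary distribution π, and suppose the concentration inequality P_μ{L_n(a) − nπ_a ≤ −nγ} ≤ exp(−(n/2)(λγ/t_0 − 2/n)²) holds for all a ∈ A, all γ > 0, all initial distributions μ, and all n > 2t_0/(λγ) (and similarly for the reversed chain). Fix an integer r ≥ 0, let π_∧ = min_a π_a, and let C = min{|A|, max_a μ_a/π_a}. Then for all n > (2t_0 + rλ + λ(1 − π_∧))/(λπ_∧): P_μ{L_n = r} ≤ P_μ{L_n ≤ r} ≤ C · exp(−(n/2)(λπ_∧/t_0 − (2 + (r+1)λ/t_0)/n)²). -/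

import Mathlib

open MeasureTheory ENNReal Finset

/-- The finite-dimensional law (with real-valued initial distribution `ρ` and real
transition matrix `Q`) of a chain `X` indexed from 0, under the measure `P`. -/
def IsRealChainLaw {A Ω : Type*} [Fintype A] [MeasurableSpace Ω]
    (P : Measure Ω) (X : ℕ → Ω → A) (ρ : A → ℝ) (Q : A → A → ℝ) : Prop :=
  ∀ (n : ℕ) (a : ℕ → A),
    P (⋂ i ∈ Finset.range (n + 1), {ω | X i ω = a i}) =
      ENNReal.ofReal (ρ (a 0) * ∏ i ∈ Finset.range n, Q (a i) (a (i + 1)))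

/-!
On `{L_n ≤ r}` the state `a = X_n` has been visited at most `r = n (π_∧ - γ) ≤ n (π_a - γ)` times,
with `γ = π_∧ - r / n`, so the concentration inequality for `L_n(a)` applies. A union bound over
`a` gives the factor `|A|`. For the factor `max_a μ_a / π_a`, dominate `μ` by that multiple of
`π`: under the stationary start, time reversal maps the path `X_0, …, X_n` to a path of the
reversed chain started at `X_n`, and `L_n` becomes the local time of that state, to which the
concentration inequality for the reversed chain applies. The exponent at `γ` dominates the
claimed one as soon as `π_∧ ≤ 1/2`, i.e. `|A| ≥ 2`; for `|A| = 1` the event is empty.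
-/

theorem MeasureTheory.measure_preimage_finset_eq_sum {α ι : Type*} [Fintype ι]
    [MeasurableSpace α] (P : Measure α) [IsProbabilityMeasure P] (f : α → ι) (w : ι → ℝ≥0∞)
    (hw : ∀ i, P (f ⁻¹' {i}) = w i) (hw1 : ∑ i, w i = 1) (s : Finset ι) :
    P (f ⁻¹' s) = ∑ i ∈ s, w i := by
  classical
  have hle : ∀ t : Finset ι, P (f ⁻¹' t) ≤ ∑ i ∈ t, w i := fun t => by
    calc P (f ⁻¹' t) = P (⋃ i ∈ t, f ⁻¹' {i}) := by congr 1; ext; simp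
      _ ≤ ∑ i ∈ t, P (f ⁻¹' {i}) := measure_biUnion_finset_le _ _
      _ = ∑ i ∈ t, w i := by simp only [hw]
  refine le_antisymm (hle s) ?_
  -- The fibres need not be measurable, so additivity is replaced by subadditivity on `sᶜ`.
  have hsplit : ∑ i ∈ s, w i + ∑ i ∈ sᶜ, w i = 1 := by rw [sum_add_sum_compl, hw1]
  have hcover : 1 ≤ P (f ⁻¹' s) + P (f ⁻¹' ↑sᶜ) := by
    rw [coe_compl, Set.preimage_compl, ← measure_univ (μ := P), ← Set.union_compl_self (f ⁻¹' s)]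
    exact measure_union_le _ _
  calc ∑ i ∈ s, w i = 1 - ∑ i ∈ sᶜ, w i :=
        ENNReal.eq_sub_of_add_eq (ne_top_of_le_ne_top one_ne_top (hsplit ▸ le_add_self)) hsplit
    _ ≤ P (f ⁻¹' s) := tsub_le_iff_right.2 (hcover.trans (add_le_add_right (hle sᶜ) _))

section PathWeight

variable {A : Type*}

def pathWeight {n : ℕ} (ρ : A → ℝ) (Q : A → A → ℝ) (v : Fin (n + 1) → A) : ℝ :=
  ρ (v 0) * ∏ i : Fin n, Q (v i.castSucc) (v i.succ)

theorem pathWeight_nonneg {n : ℕ} {ρ : A → ℝ} {Q : A → A → ℝ} (hρ : ∀ a, 0 ≤ ρ a)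
    (hQ : ∀ x y, 0 ≤ Q x y) (v : Fin (n + 1) → A) : 0 ≤ pathWeight ρ Q v :=
  mul_nonneg (hρ _) (prod_nonneg fun _ _ => hQ _ _)

theorem pathWeight_cons {n : ℕ} (ρ : A → ℝ) (Q : A → A → ℝ) (a : A) (w : Fin (n + 1) → A) :
    pathWeight ρ Q (Fin.cons a w : Fin (n + 2) → A) = ρ a * pathWeight (Q a) Q w := by
  simp only [pathWeight, Fin.prod_univ_succ, Fin.cons_zero, Fin.cons_succ, Fin.castSucc_zero,
    ← Fin.succ_castSucc]

theorem sum_pathWeight [Fintype A] {Q : A → A → ℝ} (hQ : ∀ x, ∑ y, Q x y = 1) (n : ℕ) {ρ : A → ℝ}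
    (hρ : ∑ a, ρ a = 1) : ∑ v : Fin (n + 1) → A, pathWeight ρ Q v = 1 := by
  induction n generalizing ρ with
  | zero => simpa [pathWeight] using (Equiv.funUnique (Fin 1) A).sum_comp ρ |>.trans hρ
  | succ n ih =>
    rw [← (Fin.consEquiv fun _ => A).sum_comp, Fintype.sum_prod_type]
    simp [Fin.consEquiv, pathWeight_cons, ← mul_sum, ih (hQ _), hρ]

theorem mul_prod_eq_of_detailedBalance {π : A → ℝ} {Q Qhat : A → A → ℝ}
    (hrev : ∀ x y, π x * Qhat x y = π y * Q y x) {n : ℕ} (v : Fin (n + 1) → A) :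
    π (v 0) * ∏ i : Fin n, Qhat (v i.castSucc) (v i.succ) =
      π (v (Fin.last n)) * ∏ i : Fin n, Q (v i.succ) (v i.castSucc) := by
  induction n with
  | zero => simp [Fin.last_zero]
  | succ n ih =>
    have h := ih (Fin.init v)
    simp only [Fin.init, Fin.castSucc_zero, ← Fin.succ_castSucc] at h
    rw [Fin.prod_univ_castSucc, Fin.prod_univ_castSucc, ← mul_assoc, h, mul_right_comm,
      hrev, Fin.succ_last]
    ring

theorem pathWeight_comp_rev {n : ℕ} {π : A → ℝ} {Q Qhat : A → A → ℝ}
    (hrev : ∀ x y, π x * Qhat x y = π y * Q y x) (v : Fin (n + 1) → A) :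
    pathWeight π Q (v ∘ Fin.rev) = pathWeight π Qhat v := by
  rw [pathWeight, pathWeight, Function.comp_apply, Fin.rev_zero,
    mul_prod_eq_of_detailedBalance hrev]
  congr 1
  exact Fintype.prod_equiv Fin.revPerm _ _ fun i => by simp [Fin.rev_castSucc, Fin.rev_succ]

end PathWeight

namespace IsRealChainLaw

variable {A Ω : Type*} [Fintype A] [MeasurableSpace Ω] {P : Measure Ω} {X : ℕ → Ω → A}
  {ρ : A → ℝ} {Q : A → A → ℝ}

theorem measure_path_eq (hlaw : IsRealChainLaw P X ρ Q) {n : ℕ} (v : Fin (n + 1) → A) :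
    P ((fun ω (j : Fin (n + 1)) => X j ω) ⁻¹' {v}) = ENNReal.ofReal (pathWeight ρ Q v) := by
  have hclamp : ∀ i : Fin (n + 1), Fin.clamp i n = i := fun i => Fin.ext (by simp; omega)
  convert hlaw n fun i => v (Fin.clamp i n) using 2
  · ext ω
    simp only [Set.mem_preimage, Set.mem_singleton_iff, funext_iff, Set.mem_iInter, mem_range,
      Set.mem_ofPred_eq]
    exact ⟨fun h i hi => by simpa [hclamp ⟨i, hi⟩] using h ⟨i, hi⟩,
      fun h j => by simpa [hclamp j] using h j j.isLt⟩
  · rw [pathWeight, ← Fin.prod_univ_eq_prod_range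
      (fun i => Q (v (Fin.clamp i n)) (v (Fin.clamp (i + 1) n)))]
    congr 2
    funext i
    rw [← hclamp i.castSucc, ← hclamp i.succ]
    simp

theorem measure_mem_finset_eq [IsProbabilityMeasure P] (hlaw : IsRealChainLaw P X ρ Q)
    (hρ : ∀ a, 0 ≤ ρ a) (hρ1 : ∑ a, ρ a = 1) (hQ : ∀ x y, 0 ≤ Q x y)
    (hQ1 : ∀ x, ∑ y, Q x y = 1) {n : ℕ} (s : Finset (Fin (n + 1) → A)) :
    P {ω | (fun j : Fin (n + 1) => X j ω) ∈ s} = ENNReal.ofReal (∑ v ∈ s, pathWeight ρ Q v) := by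
  rw [ENNReal.ofReal_sum_of_nonneg fun v _ => pathWeight_nonneg hρ hQ v]
  refine measure_preimage_finset_eq_sum P _ _ hlaw.measure_path_eq ?_ s
  rw [← ENNReal.ofReal_sum_of_nonneg fun v _ => pathWeight_nonneg hρ hQ v,
    sum_pathWeight hQ1 n hρ1, ENNReal.ofReal_one]

end IsRealChainLaw

section LocalTime

variable {A : Type*} [DecidableEq A]

def visitCount {m : ℕ} (w : Fin m → A) (a : A) : ℕ := ∑ i, if w i = a then 1 else 0

def localTime {Ω : Type*} (X : ℕ → Ω → A) (n : ℕ) (a : A) (ω : Ω) : ℕ :=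
  ∑ i ∈ range n, if X i ω = a then 1 else 0

theorem visitCount_eq_localTime {Ω : Type*} (X : ℕ → Ω → A) (n : ℕ) (a : A) (ω : Ω) :
    visitCount (fun j : Fin n => X j ω) a = localTime X n a ω :=
  Fin.sum_univ_eq_sum_range (fun i => if X i ω = a then 1 else 0) n

theorem visitCount_comp_rev {m : ℕ} (w : Fin m → A) (a : A) :
    visitCount (w ∘ Fin.rev) a = visitCount w a :=
  Fintype.sum_equiv Fin.revPerm _ _ fun _ => rfl

theorem visitCount_init_comp_rev {m : ℕ} (u : Fin (m + 1) → A) (a : A) :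
    visitCount (Fin.init (u ∘ Fin.rev)) a = visitCount (Fin.tail u) a := by
  rw [← visitCount_comp_rev (Fin.tail u)]
  congr 1
  funext i
  simp [Fin.init, Fin.tail, Fin.rev_castSucc]

theorem sum_pathWeight_visitCount_last_le [Fintype A] {π : A → ℝ} {Q Qhat : A → A → ℝ}
    (hrev : ∀ x y, π x * Qhat x y = π y * Q y x) (n r : ℕ) :
    ∑ v : Fin (n + 2) → A with visitCount (Fin.init v) (v (Fin.last _)) ≤ r, pathWeight π Q v =
      ∑ a, π a * ∑ w : Fin (n + 1) → A with visitCount w a ≤ r, pathWeight (Qhat a) Qhat w := by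
  have hbij : Function.Bijective
      fun p : A × (Fin (n + 1) → A) => (Fin.cons p.1 p.2 : Fin (n + 2) → A) ∘ Fin.rev :=
    ((Fin.consEquiv fun _ => A).trans (Equiv.arrowCongr Fin.revPerm (Equiv.refl A))).bijective
  rw [sum_filter, ← hbij.sum_comp, Fintype.sum_prod_type]
  refine Fintype.sum_congr _ _ fun a => ?_
  rw [sum_filter, mul_sum]
  refine Fintype.sum_congr _ _ fun w => ?_
  rw [visitCount_init_comp_rev, pathWeight_comp_rev hrev, pathWeight_cons, Function.comp_apply,
    Fin.rev_last, Fin.cons_zero, Fin.tail_cons, mul_ite, mul_zero]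

end LocalTime

theorem le_half_of_forall_le {A : Type*} [Fintype A] [Nontrivial A] {π : A → ℝ}
    (hπ1 : ∑ a, π a = 1) {m : ℝ} (hm0 : 0 ≤ m) (hm : ∀ a, m ≤ π a) : m ≤ 1 / 2 := by
  have hcard : (2 : ℝ) ≤ Fintype.card A := by exact_mod_cast Fintype.one_lt_card
  have := card_nsmul_le_sum univ π m fun a _ => hm a
  rw [card_univ, nsmul_eq_mul, hπ1] at this
  nlinarith

section Reversal

variable {A : Type*} {π : A → ℝ} {Q Qhat : A → A → ℝ}

theorem reversal_mul_eq (hπ : ∀ x, 0 < π x) (hQhat : ∀ x y, Qhat x y = π y * Q y x / π x)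
    (x y : A) : π x * Qhat x y = π y * Q y x := by
  rw [hQhat, mul_div_cancel₀ _ (hπ x).ne']

theorem reversal_nonneg (hπ : ∀ x, 0 < π x) (hQhat : ∀ x y, Qhat x y = π y * Q y x / π x)
    (hQ : ∀ x y, 0 ≤ Q x y) (x y : A) : 0 ≤ Qhat x y := by
  rw [hQhat]
  exact div_nonneg (mul_nonneg (hπ y).le (hQ y x)) (hπ x).le

theorem reversal_sum_eq_one [Fintype A] (hπ : ∀ x, 0 < π x)
    (hQhat : ∀ x y, Qhat x y = π y * Q y x / π x) (hstat : ∀ x, ∑ y, π y * Q y x = π x)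
    (x : A) : ∑ y, Qhat x y = 1 := by
  simp only [hQhat, ← sum_div, hstat x, div_self (hπ x).ne']

end Reversal

section LocalTimeBounds

variable {A Ω : Type*} [DecidableEq A]

theorem setOf_localTime_last_le_eq_empty [Subsingleton A] (X : ℕ → Ω → A) {n r : ℕ}
    (hr : r < n) : {ω | localTime X n (X n ω) ω ≤ r} = ∅ := by
  simp [localTime, eq_iff_true_of_subsingleton, not_le.2 hr]

theorem setOf_localTime_le_subset {π : A → ℝ} {m : ℝ} (hm : ∀ a, m ≤ π a) (X : ℕ → Ω → A)
    {n : ℕ} (hn : (n : ℝ) ≠ 0) (r : ℕ) (a : A) :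
    {ω | localTime X n a ω ≤ r} ⊆
      {ω | (localTime X n a ω : ℝ) - n * π a ≤ -(n * (m - r / n))} := by
  intro ω hω
  have hω' : (localTime X n a ω : ℝ) ≤ r := by exact_mod_cast hω
  have := mul_le_mul_of_nonneg_left (hm a) (Nat.cast_nonneg n)
  simp only [Set.mem_ofPred_eq, mul_sub, mul_div_cancel₀ _ hn]
  linarith

end LocalTimeBounds

section Bounds

variable {A Ω : Type*} [Fintype A] [DecidableEq A] [MeasurableSpace Ω]

theorem measure_localTime_last_le_le_card_mul (P : Measure Ω) (X : ℕ → Ω → A) (n r : ℕ)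
    {B : ℝ} (hB : ∀ a, P {ω | localTime X n a ω ≤ r} ≤ ENNReal.ofReal B) :
    P {ω | localTime X n (X n ω) ω ≤ r} ≤ ENNReal.ofReal (Fintype.card A * B) :=
  calc P {ω | localTime X n (X n ω) ω ≤ r}
      ≤ P (⋃ a ∈ (univ : Finset A), {ω | localTime X n a ω ≤ r}) :=
        measure_mono fun ω h => Set.mem_biUnion (mem_univ (X n ω)) h
    _ ≤ ∑ a, P {ω | localTime X n a ω ≤ r} := measure_biUnion_finset_le _ _
    _ ≤ ∑ _a : A, ENNReal.ofReal B := sum_le_sum fun a _ => hB a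
    _ = ENNReal.ofReal (Fintype.card A * B) := by
      rw [ENNReal.ofReal_mul (Nat.cast_nonneg _), ofReal_natCast, sum_const, card_univ,
        nsmul_eq_mul]

theorem measure_localTime_last_le_le_of_reversed {Ω' : Type*} [MeasurableSpace Ω']
    {π μ : A → ℝ} {Q Qhat : A → A → ℝ} (hQ : ∀ x y, 0 ≤ Q x y) (hQ1 : ∀ x, ∑ y, Q x y = 1)
    (hQhat : ∀ x y, 0 ≤ Qhat x y) (hQhat1 : ∀ x, ∑ y, Qhat x y = 1)
    (hrev : ∀ x y, π x * Qhat x y = π y * Q y x) (hπ : ∀ a, 0 ≤ π a) (hπ1 : ∑ a, π a = 1)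
    {X : ℕ → Ω → A} {P : Measure Ω} [IsProbabilityMeasure P] (hμ : ∀ a, 0 ≤ μ a)
    (hμ1 : ∑ a, μ a = 1) (hlaw : IsRealChainLaw P X μ Q)
    {Y : ℕ → Ω' → A} {P' : A → Measure Ω'} [∀ a, IsProbabilityMeasure (P' a)]
    (hlaw' : ∀ a, IsRealChainLaw (P' a) Y (Qhat a) Qhat)
    {c : ℝ} (hc : 0 ≤ c) (hμc : ∀ a, μ a ≤ c * π a) (n r : ℕ) {B : ℝ} (hB0 : 0 ≤ B)
    (hB : ∀ a, P' a {ω | localTime Y (n + 1) a ω ≤ r} ≤ ENNReal.ofReal B) :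
    P {ω | localTime X (n + 1) (X (n + 1) ω) ω ≤ r} ≤ ENNReal.ofReal (c * B) := by
  have hP : P {ω | localTime X (n + 1) (X (n + 1) ω) ω ≤ r} = ENNReal.ofReal
      (∑ v : Fin (n + 2) → A with visitCount (Fin.init v) (v (Fin.last _)) ≤ r,
        pathWeight μ Q v) := by
    rw [← hlaw.measure_mem_finset_eq hμ hμ1 hQ hQ1]
    congr 1
    ext ω
    simp only [Set.mem_ofPred_eq, mem_filter, mem_univ, true_and, ← visitCount_eq_localTime]
    rfl
  have hP' : ∀ a, ∑ w : Fin (n + 1) → A with visitCount w a ≤ r,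
      pathWeight (Qhat a) Qhat w ≤ B := by
    intro a
    rw [← ENNReal.ofReal_le_ofReal_iff hB0,
      ← (hlaw' a).measure_mem_finset_eq (hQhat a) (hQhat1 a) hQhat hQhat1]
    simpa [visitCount_eq_localTime] using hB a
  rw [hP]
  refine ENNReal.ofReal_le_ofReal ?_
  calc ∑ v : Fin (n + 2) → A with visitCount (Fin.init v) (v (Fin.last _)) ≤ r, pathWeight μ Q v
      ≤ ∑ v : Fin (n + 2) → A with visitCount (Fin.init v) (v (Fin.last _)) ≤ r,
          c * pathWeight π Q v := sum_le_sum fun v _ => by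
        rw [pathWeight, pathWeight, ← mul_assoc]
        exact mul_le_mul_of_nonneg_right (hμc _) (prod_nonneg fun _ _ => hQ _ _)
    _ = c * ∑ a, π a *
          ∑ w : Fin (n + 1) → A with visitCount w a ≤ r, pathWeight (Qhat a) Qhat w := by
        rw [← mul_sum, sum_pathWeight_visitCount_last_le hrev]
    _ ≤ c * ∑ a, π a * B := by gcongr with a; exacts [hπ a, hP' a]
    _ = c * B := by rw [← sum_mul, hπ1, one_mul]

end Bounds

section Rate

variable {t lam p r n : ℝ}

theorem sub_div_pos_and_div_lt (ht : 0 ≤ t) (hlam : 0 < lam) (hp : p ≤ 1) (hn0 : 0 < n)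
    (hn : 2 * t + r * lam + lam * (1 - p) < n * (lam * p)) :
    0 < p - r / n ∧ 2 * t / (lam * (p - r / n)) < n := by
  have hγ : n * (p - r / n) = n * p - r := by field_simp
  have hγpos : 0 < p - r / n := by
    by_contra! h
    nlinarith [mul_nonpos_of_nonneg_of_nonpos hn0.le h]
  refine ⟨hγpos, (div_lt_iff₀ (by positivity)).2 ?_⟩
  nlinarith

theorem exp_rate_le (ht : 0 < t) (hlam : 0 < lam) (hp : p ≤ 1 / 2) (hn0 : 0 < n)
    (hn : 2 * t + r * lam + lam * (1 - p) < n * (lam * p)) :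
    Real.exp (-(n / 2) * (lam * (p - r / n) / t - 2 / n) ^ 2) ≤
      Real.exp (-(n / 2) * (lam * p / t - (2 + (r + 1) * lam / t) / n) ^ 2) := by
  set K := n * (lam * p) - r * lam - 2 * t with hKdef
  have hK : lam * (p - r / n) / t - 2 / n = K / (n * t) := by field_simp; ring
  have hK' : lam * p / t - (2 + (r + 1) * lam / t) / n = (K - lam) / (n * t) := by
    field_simp; ring
  rw [hK, hK', Real.exp_le_exp, div_pow, div_pow]
  have h2K : lam ≤ 2 * K := by nlinarith
  have hsq : (K - lam) ^ 2 ≤ K ^ 2 := by nlinarith [mul_le_mul_of_nonneg_left h2K hlam.le]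
  rw [neg_mul, neg_mul, neg_le_neg_iff]
  gcongr

end Rate
theorem finite_chain_Ln_bound_general {A : Type*} [Fintype A] [DecidableEq A]
    {Ω Ω' : Type*} [MeasurableSpace Ω] [MeasurableSpace Ω']
    (Q Qhat : A → A → ℝ) (π : A → ℝ)
    (hQnn : ∀ x y, 0 ≤ Q x y) (hQ : ∀ x, ∑ y, Q x y = 1)
    (hπpos : ∀ x, 0 < π x) (hπsum : ∑ x, π x = 1)
    (hstat : ∀ x, ∑ y, π y * Q y x = π x)
    (hQhat : ∀ x y, Qhat x y = π y * Q y x / π x)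
    (t₀ : ℕ) (ht₀ : 1 ≤ t₀) (lam : ℝ) (hlam : 0 < lam ∧ lam ≤ 1)
    (X : ℕ → Ω → A) (Y : ℕ → Ω' → A)
    (Pr : (A → ℝ) → Measure Ω) (Pr' : (A → ℝ) → Measure Ω')
    (hPr : ∀ ρ, IsProbabilityMeasure (Pr ρ)) (hPr' : ∀ ρ, IsProbabilityMeasure (Pr' ρ))
    (hlaw : ∀ ρ : A → ℝ, (∀ a, 0 ≤ ρ a) → (∑ a, ρ a = 1) → IsRealChainLaw (Pr ρ) X ρ Q)
    (hlaw' : ∀ ρ : A → ℝ, (∀ a, 0 ≤ ρ a) → (∑ a, ρ a = 1) → IsRealChainLaw (Pr' ρ) Y ρ Qhat)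
    -- concentration inequality for the chain, any initial distribution
    (hconc : ∀ ρ : A → ℝ, (∀ a, 0 ≤ ρ a) → (∑ a, ρ a = 1) →
      ∀ (a : A) (γ : ℝ), 0 < γ → ∀ n : ℕ, (2 * t₀) / (lam * γ) < n →
        Pr ρ {ω | ((∑ i ∈ Finset.range n, if X i ω = a then 1 else 0 : ℕ) : ℝ)
            - n * π a ≤ -(n * γ)} ≤
          ENNReal.ofReal (Real.exp (-(n / 2) * (lam * γ / t₀ - 2 / n) ^ 2)))
    -- concentration inequality for the reversed chain, any initial distribution
    (hconc' : ∀ ρ : A → ℝ, (∀ a, 0 ≤ ρ a) → (∑ a, ρ a = 1) →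
      ∀ (a : A) (γ : ℝ), 0 < γ → ∀ n : ℕ, (2 * t₀) / (lam * γ) < n →
        Pr' ρ {ω | ((∑ i ∈ Finset.range n, if Y i ω = a then 1 else 0 : ℕ) : ℝ)
            - n * π a ≤ -(n * γ)} ≤
          ENNReal.ofReal (Real.exp (-(n / 2) * (lam * γ / t₀ - 2 / n) ^ 2)))
    (μ : A → ℝ) (hμnn : ∀ a, 0 ≤ μ a) (hμsum : ∑ a, μ a = 1)
    (πmin : ℝ) (hπmin : IsLeast {x : ℝ | ∃ a, π a = x} πmin)
    (mrat : ℝ) (hmrat : IsGreatest {x : ℝ | ∃ a, μ a / π a = x} mrat)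
    (C : ℝ) (hC : C = min (Fintype.card A : ℝ) mrat)
    (r : ℕ) (n : ℕ)
    (hn : (2 * t₀ + r * lam + lam * (1 - πmin)) / (lam * πmin) < n) :
    Pr μ {ω | (∑ i ∈ Finset.range n, if X i ω = X n ω then 1 else 0 : ℕ) = r} ≤
        Pr μ {ω | (∑ i ∈ Finset.range n, if X i ω = X n ω then 1 else 0 : ℕ) ≤ r} ∧
      Pr μ {ω | (∑ i ∈ Finset.range n, if X i ω = X n ω then 1 else 0 : ℕ) ≤ r} ≤
        ENNReal.ofReal (C * Real.exp
          (-(n / 2) * (lam * πmin / t₀ - (2 + (r + 1) * lam / t₀) / n) ^ 2)) := by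
  obtain ⟨hlam0, -⟩ := hlam
  refine ⟨measure_mono fun ω h => h.le, ?_⟩
  change Pr μ {ω | localTime X n (X n ω) ω ≤ r} ≤ _
  have := hPr μ
  have hπmin_le : ∀ a, πmin ≤ π a := fun a => hπmin.2 ⟨a, rfl⟩
  obtain ⟨a₀, hπa₀⟩ := hπmin.1
  have hπmin_pos : 0 < πmin := hπa₀ ▸ hπpos a₀
  have hπmin_one : πmin ≤ 1 :=
    hπa₀ ▸ hπsum ▸ single_le_sum (fun a _ => (hπpos a).le) (mem_univ a₀)
  have ht₀' : (0 : ℝ) < t₀ := by exact_mod_cast ht₀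
  have hn_mul := (div_lt_iff₀ (by positivity)).1 hn
  have hn0 : (0 : ℝ) < n := lt_of_le_of_lt (by positivity) hn
  obtain ⟨hγ, hcond⟩ := sub_div_pos_and_div_lt ht₀'.le hlam0 hπmin_one hn0 hn_mul
  rcases subsingleton_or_nontrivial A with hA | hA
  · have hrn : (r : ℝ) < n := (div_lt_one hn0).1 (by linarith)
    simp [setOf_localTime_last_le_eq_empty X (by exact_mod_cast hrn : r < n)]
  have hexp := exp_rate_le ht₀' hlam0 (le_half_of_forall_le hπsum hπmin_pos.le hπmin_le) hn0 hn_mul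
  have hμc : ∀ a, μ a ≤ mrat * π a := fun a => (div_le_iff₀ (hπpos a)).1 (hmrat.2 ⟨a, rfl⟩)
  have hc : 0 ≤ mrat := hmrat.1.elim fun a ha => ha ▸ div_nonneg (hμnn a) (hπpos a).le
  obtain ⟨N, rfl⟩ := Nat.exists_eq_add_one.2 (by exact_mod_cast hn0)
  have hfwd := measure_localTime_last_le_le_card_mul (Pr μ) X _ r fun a =>
    (measure_mono (setOf_localTime_le_subset hπmin_le X hn0.ne' r a)).trans
      (hconc μ hμnn hμsum a _ hγ _ hcond)
  have hQhat_nn := reversal_nonneg hπpos hQhat hQnn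
  have hQhat_one := reversal_sum_eq_one hπpos hQhat hstat
  have := fun a => hPr' (Qhat a)
  have hbwd := measure_localTime_last_le_le_of_reversed hQnn hQ hQhat_nn hQhat_one
    (reversal_mul_eq hπpos hQhat) (fun a => (hπpos a).le) hπsum hμnn hμsum
    (hlaw μ hμnn hμsum) (fun a => hlaw' _ (hQhat_nn a) (hQhat_one a)) hc hμc N r
    (Real.exp_nonneg _) fun a =>
      (measure_mono (setOf_localTime_le_subset hπmin_le Y hn0.ne' r a)).trans
        (hconc' _ (hQhat_nn a) (hQhat_one a) a _ hγ _ hcond)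
  rw [hC, min_mul_of_nonneg _ _ (Real.exp_nonneg _), ENNReal.ofReal_min]
  exact le_min (hfwd.trans (by gcongr)) (hbwd.trans (by gcongr))

/-- Proposition 3.1: given the Glynn–Ormoneit concentration inequality for
the local times of the chain and of its reversed chain (for every initial distribution),
for `n > (2t₀ + rλ + λ(1 − π_∧))/(λπ_∧)` one has
`P_μ{L_n = r} ≤ P_μ{L_n ≤ r} ≤ C exp(−(n/2)(λπ_∧/t₀ − (2 + (r+1)λ/t₀)/n)²)`,
where `π_∧ = min_a π_a` and `C = min{|A|, max_a μ_a/π_a}`. (Indexed from 0: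
`L_n = Σ_{i<n} 1{X_i = X_n}`.) -/
theorem finite_chain_Ln_bound {A : Type*} [Fintype A] [Nonempty A] [DecidableEq A]
    {Ω Ω' : Type*} [MeasurableSpace Ω] [MeasurableSpace Ω']
    (Q Qhat : A → A → ℝ) (π : A → ℝ)
    (hQnn : ∀ x y, 0 ≤ Q x y) (hQ : ∀ x, ∑ y, Q x y = 1)
    (hπpos : ∀ x, 0 < π x) (hπsum : ∑ x, π x = 1)
    (hstat : ∀ x, ∑ y, π y * Q y x = π x)
    (hQhat : ∀ x y, Qhat x y = π y * Q y x / π x)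
    (t₀ : ℕ) (ht₀ : 1 ≤ t₀) (lam : ℝ) (hlam : 0 < lam ∧ lam ≤ 1)
    (X : ℕ → Ω → A) (Y : ℕ → Ω' → A)
    (Pr : (A → ℝ) → Measure Ω) (Pr' : (A → ℝ) → Measure Ω')
    (hPr : ∀ ρ, IsProbabilityMeasure (Pr ρ)) (hPr' : ∀ ρ, IsProbabilityMeasure (Pr' ρ))
    (hlaw : ∀ ρ : A → ℝ, (∀ a, 0 ≤ ρ a) → (∑ a, ρ a = 1) → IsRealChainLaw (Pr ρ) X ρ Q)
    (hlaw' : ∀ ρ : A → ℝ, (∀ a, 0 ≤ ρ a) → (∑ a, ρ a = 1) → IsRealChainLaw (Pr' ρ) Y ρ Qhat)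
    -- concentration inequality for the chain, any initial distribution
    (hconc : ∀ ρ : A → ℝ, (∀ a, 0 ≤ ρ a) → (∑ a, ρ a = 1) →
      ∀ (a : A) (γ : ℝ), 0 < γ → ∀ n : ℕ, (2 * t₀) / (lam * γ) < n →
        Pr ρ {ω | ((∑ i ∈ Finset.range n, if X i ω = a then 1 else 0 : ℕ) : ℝ)
            - n * π a ≤ -(n * γ)} ≤
          ENNReal.ofReal (Real.exp (-(n / 2) * (lam * γ / t₀ - 2 / n) ^ 2)))
    -- concentration inequality for the reversed chain, any initial distribution
    (hconc' : ∀ ρ : A → ℝ, (∀ a, 0 ≤ ρ a) → (∑ a, ρ a = 1) →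
      ∀ (a : A) (γ : ℝ), 0 < γ → ∀ n : ℕ, (2 * t₀) / (lam * γ) < n →
        Pr' ρ {ω | ((∑ i ∈ Finset.range n, if Y i ω = a then 1 else 0 : ℕ) : ℝ)
            - n * π a ≤ -(n * γ)} ≤
          ENNReal.ofReal (Real.exp (-(n / 2) * (lam * γ / t₀ - 2 / n) ^ 2)))
    (μ : A → ℝ) (hμnn : ∀ a, 0 ≤ μ a) (hμsum : ∑ a, μ a = 1)
    (πmin : ℝ) (hπmin : IsLeast {x : ℝ | ∃ a, π a = x} πmin)
    (mrat : ℝ) (hmrat : IsGreatest {x : ℝ | ∃ a, μ a / π a = x} mrat)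
    (C : ℝ) (hC : C = min (Fintype.card A : ℝ) mrat)
    (r : ℕ) (n : ℕ)
    (hn : (2 * t₀ + r * lam + lam * (1 - πmin)) / (lam * πmin) < n) :
    Pr μ {ω | (∑ i ∈ Finset.range n, if X i ω = X n ω then 1 else 0 : ℕ) = r} ≤
        Pr μ {ω | (∑ i ∈ Finset.range n, if X i ω = X n ω then 1 else 0 : ℕ) ≤ r} ∧
      Pr μ {ω | (∑ i ∈ Finset.range n, if X i ω = X n ω then 1 else 0 : ℕ) ≤ r} ≤
        ENNReal.ofReal (C * Real.exp
          (-(n / 2) * (lam * πmin / t₀ - (2 + (r + 1) * lam / t₀) / n) ^ 2)) :=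
  finite_chain_Ln_bound_general Q Qhat π hQnn hQ hπpos hπsum hstat hQhat t₀ ht₀ lam hlam X Y Pr Pr'
    hPr hPr' hlaw hlaw' hconc hconc' μ hμnn hμsum πmin hπmin mrat hmrat C hC r n hn
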